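/- arXiv:2409.16233 — 3 statements merged into one kernel-verified Lean document; each statement's English description precedes it below -/
import Mathlib

section
/- Let G be a left partially ordered group (a ≤ b implies ca ≤ cb for all c) with identity e and positive cone G⁺ = {x ∈ G : x > e}. Let B be a nonempty subset of G⁺, and let J be a downward closed subset of G⁺ such that J* = J \ B is nonempty and, for all x ∈ J*, the set B*(x) = {b ∈ B : b < x} is nonempty and finite. Then there is a family {J_ℓ : ℓ ∈ L} of pairwise disjoint nonempty subsets of J* with J* = ⋃_{ℓ ∈ L} J_ℓ and, for each ℓ ∈ L, an element b_ℓ ∈ B such that b_ℓ^{-1} J_ℓ is a downward closed subset of G⁺. -/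
/-!
Fix a linear extension `≼` of the order and let `f x` be the `≼`-greatest element of the finite
set `B*(x)`; it is in particular `<`-maximal there. The pieces `J_ℓ` are the fibres of `f`, with
`b_ℓ = ℓ`. If `e < z < (f x)⁻¹ x`, then `f x < f x * z < x`, so `f x * z ∈ J` by downward
closedness, `f x * z ∉ B` by maximality, and `f (f x * z) = f x` because the `≼`-greatest element
of `B*(x)` still lies in the smaller set `B*(f x * z)`.
-/

/-- A subset `S` of the positive cone `G⁺ = {x : 1 < x}` is downward closed if
`x ∈ S` implies `(e, x) ⊆ S`. -/
def DownwardClosed {G : Type*} [Group G] [PartialOrder G] (S : Set G) : Prop :=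
  S ⊆ Set.Ioi 1 ∧ ∀ x ∈ S, Set.Ioo (1 : G) x ⊆ S

open Set

section MaxBelow

variable {α : Type*} [PartialOrder α] {B : Set α} {x : α}

theorem toLinearExtension_injective :
    Function.Injective (toLinearExtension : α →o LinearExtension α) :=
  fun _ _ h => h

theorem toLinearExtension_strictMono :
    StrictMono (toLinearExtension : α →o LinearExtension α) :=
  toLinearExtension.monotone.strictMono_of_injective toLinearExtension_injective

open Classical in
/-- Junk value `x` when `B ∩ Iio x` has no greatest element in the linear extension. -/
noncomputable def maxBelow (B : Set α) (x : α) : α :=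
  if h : ∃ m ∈ B ∩ Iio x, ∀ b ∈ B ∩ Iio x, toLinearExtension b ≤ toLinearExtension m
  then h.choose else x

theorem maxBelow_spec (hfin : (B ∩ Iio x).Finite) (hne : (B ∩ Iio x).Nonempty) :
    maxBelow B x ∈ B ∩ Iio x ∧
      ∀ b ∈ B ∩ Iio x, toLinearExtension b ≤ toLinearExtension (maxBelow B x) := by
  have h := exists_max_image _ toLinearExtension hfin hne
  rw [maxBelow, dif_pos h]
  exact h.choose_spec

theorem maxBelow_eq_of_isGreatest {m : α} (hm : m ∈ B ∩ Iio x)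
    (hgreat : ∀ b ∈ B ∩ Iio x, toLinearExtension b ≤ toLinearExtension m) :
    maxBelow B x = m := by
  have h : ∃ m ∈ B ∩ Iio x, ∀ b ∈ B ∩ Iio x, toLinearExtension b ≤ toLinearExtension m :=
    ⟨m, hm, hgreat⟩
  rw [maxBelow, dif_pos h]
  exact toLinearExtension_injective <|
    le_antisymm (hgreat _ h.choose_spec.1) (h.choose_spec.2 _ hm)

theorem not_maxBelow_lt (hfin : (B ∩ Iio x).Finite) (hne : (B ∩ Iio x).Nonempty)
    {b : α} (hb : b ∈ B) (hbx : b < x) : ¬ maxBelow B x < b := fun hlt =>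
  (toLinearExtension_strictMono hlt).not_ge ((maxBelow_spec hfin hne).2 b ⟨hb, hbx⟩)

theorem maxBelow_eq_of_lt_of_lt (hfin : (B ∩ Iio x).Finite) (hne : (B ∩ Iio x).Nonempty)
    {w : α} (h₁ : maxBelow B x < w) (h₂ : w < x) : maxBelow B w = maxBelow B x :=
  maxBelow_eq_of_isGreatest ⟨(maxBelow_spec hfin hne).1.1, h₁⟩
    fun b hb => (maxBelow_spec hfin hne).2 b ⟨hb.1, hb.2.trans h₂⟩

end MaxBelow

section Group

variable {G : Type*} [Group G] [PartialOrder G] {B J : Set G}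

theorem mem_diff_and_maxBelow_eq (hBpos : B ⊆ Ioi 1) (hJ : DownwardClosed J) {x w : G}
    (hx : x ∈ J) (hfin : (B ∩ Iio x).Finite) (hne : (B ∩ Iio x).Nonempty)
    (h₁ : maxBelow B x < w) (h₂ : w < x) :
    w ∈ J \ B ∧ maxBelow B w = maxBelow B x := by
  have hw₁ : 1 < w := (hBpos (maxBelow_spec hfin hne).1.1).trans h₁
  exact ⟨⟨hJ.2 x hx ⟨hw₁, h₂⟩, fun hwB => not_maxBelow_lt hfin hne hwB h₂ h₁⟩,
    maxBelow_eq_of_lt_of_lt hfin hne h₁ h₂⟩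

theorem downwardClosed_inv_mul_image_fiber [CovariantClass G G (· * ·) (· ≤ ·)]
    (hBpos : B ⊆ Ioi 1) (hJ : DownwardClosed J)
    (hBx : ∀ x ∈ J \ B, (B ∩ Iio x).Nonempty ∧ (B ∩ Iio x).Finite) (ℓ : G) :
    DownwardClosed ((fun y => ℓ⁻¹ * y) '' ((J \ B) ∩ maxBelow B ⁻¹' {ℓ})) := by
  have below : ∀ x ∈ (J \ B) ∩ maxBelow B ⁻¹' {ℓ}, ℓ < x := by
    rintro x ⟨hx, rfl⟩
    exact (maxBelow_spec (hBx x hx).2 (hBx x hx).1).1.2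
  refine ⟨?_, ?_⟩
  · rintro _ ⟨x, hx, rfl⟩
    exact lt_inv_mul_iff_lt.2 (below x hx)
  · rintro _ ⟨x, hx, rfl⟩ z ⟨hz₁, hz₂⟩
    have hℓx : maxBelow B x = ℓ := hx.2
    have h₁ : ℓ < ℓ * z := (lt_mul_iff_one_lt_right' ℓ).2 hz₁
    have h₂ : ℓ * z < x := lt_inv_mul_iff_mul_lt.1 hz₂
    obtain ⟨hw, hmax⟩ := mem_diff_and_maxBelow_eq hBpos hJ hx.1.1 (hBx x hx.1).2
      (hBx x hx.1).1 (hℓx ▸ h₁) h₂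
    exact ⟨ℓ * z, ⟨hw, hmax.trans hℓx⟩, inv_mul_cancel_left ℓ z⟩

end Group

theorem partition_left_ordered_general
    {G : Type*} [Group G] [PartialOrder G]
    [CovariantClass G G (· * ·) (· ≤ ·)]
    (B J : Set G) (hBpos : B ⊆ Set.Ioi 1)
    (hJ : DownwardClosed J)
    (hBx : ∀ x ∈ J \ B, (B ∩ Set.Iio x).Nonempty ∧ (B ∩ Set.Iio x).Finite) :
    ∃ (L : Set G) (Jfam : G → Set G) (b : G → G),
      (∀ ℓ ∈ L, (Jfam ℓ).Nonempty ∧ Jfam ℓ ⊆ J \ B) ∧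
      (L.Pairwise fun ℓ₁ ℓ₂ => Disjoint (Jfam ℓ₁) (Jfam ℓ₂)) ∧
      (⋃ ℓ ∈ L, Jfam ℓ) = J \ B ∧
      (∀ ℓ ∈ L, b ℓ ∈ B ∧ DownwardClosed ((fun y => (b ℓ)⁻¹ * y) '' Jfam ℓ)) := by
  refine ⟨maxBelow B '' (J \ B), fun ℓ => (J \ B) ∩ maxBelow B ⁻¹' {ℓ}, id,
    ?_, ?_, ?_, ?_⟩
  · rintro _ ⟨x, hx, rfl⟩
    exact ⟨⟨x, hx, rfl⟩, inter_subset_left⟩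
  · exact fun ℓ₁ _ ℓ₂ _ hne =>
      (pairwiseDisjoint_fiber (maxBelow B) univ (mem_univ _) (mem_univ _) hne).mono
        inter_subset_right inter_subset_right
  · refine (iUnion₂_subset fun _ _ => inter_subset_left).antisymm fun x hx => ?_
    exact mem_biUnion ⟨x, hx, rfl⟩ ⟨hx, rfl⟩
  · rintro _ ⟨x, hx, rfl⟩
    exact ⟨(maxBelow_spec (hBx x hx).2 (hBx x hx).1).1.1,
      downwardClosed_inv_mul_image_fiber hBpos hJ hBx _⟩

/-- Partition theorem for left partially ordered groups: `J* = J \ B`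
decomposes into pairwise disjoint nonempty pieces `J_ℓ`, each with a
`b_ℓ ∈ B` such that `b_ℓ⁻¹ J_ℓ` is a downward closed subset of `G⁺`. -/
theorem partition_left_ordered
    {G : Type*} [Group G] [PartialOrder G]
    [CovariantClass G G (· * ·) (· ≤ ·)]
    (B J : Set G) (hBne : B.Nonempty) (hBpos : B ⊆ Set.Ioi 1)
    (hJ : DownwardClosed J) (hJstar : (J \ B).Nonempty)
    (hBx : ∀ x ∈ J \ B, (B ∩ Set.Iio x).Nonempty ∧ (B ∩ Set.Iio x).Finite) :
    ∃ (L : Set G) (Jfam : G → Set G) (b : G → G),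
      (∀ ℓ ∈ L, (Jfam ℓ).Nonempty ∧ Jfam ℓ ⊆ J \ B) ∧
      (L.Pairwise fun ℓ₁ ℓ₂ => Disjoint (Jfam ℓ₁) (Jfam ℓ₂)) ∧
      (⋃ ℓ ∈ L, Jfam ℓ) = J \ B ∧
      (∀ ℓ ∈ L, b ℓ ∈ B ∧ DownwardClosed ((fun y => (b ℓ)⁻¹ * y) '' Jfam ℓ)) :=
  partition_left_ordered_general B J hBpos hJ hBx
end

section
/- Let G be a right partially ordered group (a ≤ b implies ac ≤ bc for all c) with identity e and positive cone G⁺ = {x ∈ G : x > e}, and let 𝒥 be the set of all downward closed nonempty finite subsets of G⁺, with associated density σ_𝒥. Let A and B be subsets of G⁺ with σ_𝒥(A) = α and σ_𝒥(B) = β. Suppose that for every J ∈ 𝒥 and every x ∈ J \ B, the set B*(x) = {b ∈ B : b < x} is nonempty and finite. Then σ_𝒥(AB) ≥ α + β − αβ. -/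
/-- The collection of all downward closed nonempty finite subsets of the
positive cone of `G`. -/
def goodJ (G : Type*) [Group G] [PartialOrder G] : Set (Set G) :=
  {J | J.Nonempty ∧ J.Finite ∧ DownwardClosed J}

/-- The density `σ_𝒥(A) = inf { |A ∩ J| / |J| : J ∈ 𝒥 }` determined by a
collection `𝒥` of subsets of `X`. -/
noncomputable def densJ {X : Type*} (𝒥 : Set (Set X)) (A : Set X) : ℝ :=
  sInf ((fun J => ((A ∩ J).ncard : ℝ) / (J.ncard : ℝ)) '' 𝒥)

/-- The product set `AB = {ab : a ∈ A ∪ {e}, b ∈ B ∪ {e}}`. -/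
def prodset {G : Type*} [Group G] (A B : Set G) : Set G :=
  {g | ∃ a ∈ A ∪ {1}, ∃ b ∈ B ∪ {1}, a * b = g}

/-!
Fix a linear extension of the order. For `x ∈ J \ B` let `b` be the last element of `B` below `x`;
the points of `J \ B` sharing the same `b` form a gap `F` with `F b⁻¹` downward closed, so
`F b⁻¹ ∈ 𝒥`, whence `α |F| ≤ |A ∩ F b⁻¹| ≤ |AB ∩ F|`. Summing over the gaps,
`|AB ∩ J| ≥ |B ∩ J| + α |J \ B| ≥ (α + β - αβ) |J|`, as in Shnirel'man's original argument.
-/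

open Finset in
theorem mul_ncard_le_of_fiberwise {ι κ : Type*} {D : Set ι} (hD : D.Finite) (S : Set ι)
    (φ : ι → κ) {c : ℝ}
    (h : ∀ b ∈ φ '' D, c * {x ∈ D | φ x = b}.ncard ≤ (S ∩ {x ∈ D | φ x = b}).ncard) :
    c * D.ncard ≤ (S ∩ D).ncard := by
  classical
  obtain ⟨s, rfl⟩ := hD.exists_finset_coe
  have hfiber (b : κ) : ({x ∈ (s : Set ι) | φ x = b} : Set ι) = ↑{x ∈ s | φ x = b} := by
    simp
  have hinter (t : Finset ι) : S ∩ (t : Set ι) = ↑{x ∈ t | x ∈ S} := by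
    ext; simp [and_comm]
  simp only [hfiber, hinter, Set.ncard_coe_finset, ← Finset.coe_image] at h ⊢
  rw [card_eq_sum_card_fiberwise (f := φ) (t := s.image φ) fun x hx ↦
      mem_image_of_mem φ (mem_filter.1 hx).1,
    card_eq_sum_card_fiberwise (f := φ) (t := s.image φ) fun x hx ↦ mem_image_of_mem φ hx]
  push_cast
  rw [mul_sum]
  refine sum_le_sum fun b hb ↦ (h b hb).trans_eq ?_
  simp only [filter_filter, and_comm]

section Density

variable {X : Type*} {𝒥 : Set (Set X)}

theorem densJ_mul_ncard_le (A : Set X) {L : Set X} (hL : L ∈ 𝒥) :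
    densJ 𝒥 A * L.ncard ≤ (A ∩ L).ncard := by
  rcases Nat.eq_zero_or_pos L.ncard with h0 | hpos
  · simp [h0]
  rw [← le_div_iff₀ (by exact_mod_cast hpos)]
  exact csInf_le ⟨0, by rintro _ ⟨J, -, rfl⟩; positivity⟩ ⟨L, hL, rfl⟩

theorem le_densJ (A : Set X) {c : ℝ} (hne : 𝒥.Nonempty) (hpos : ∀ J ∈ 𝒥, 0 < J.ncard)
    (h : ∀ J ∈ 𝒥, c * J.ncard ≤ (A ∩ J).ncard) : c ≤ densJ 𝒥 A := by
  refine le_csInf (hne.image _) ?_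
  rintro _ ⟨J, hJ, rfl⟩
  rw [le_div_iff₀ (by exact_mod_cast hpos J hJ)]
  exact h J hJ

theorem densJ_le_one (A : Set X) {L : Set X} (hL : L ∈ 𝒥) (hpos : 0 < L.ncard) :
    densJ 𝒥 A ≤ 1 := by
  have hLpos : (0 : ℝ) < L.ncard := by exact_mod_cast hpos
  have hAL : ((A ∩ L).ncard : ℝ) ≤ L.ncard := by
    exact_mod_cast Set.ncard_inter_le_ncard_right A L (Set.finite_of_ncard_pos hpos)
  nlinarith [densJ_mul_ncard_le A hL]

@[simp]
theorem densJ_empty (A : Set X) : densJ ∅ A = 0 := by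
  simp [densJ]

end Density

theorem ncard_pos_of_mem_goodJ {G : Type*} [Group G] [PartialOrder G] {J : Set G}
    (hJ : J ∈ goodJ G) : 0 < J.ncard :=
  (Set.ncard_pos hJ.2.1).2 hJ.1

section Prodset

variable {G : Type*} [Group G]

theorem subset_prodset_right (A B : Set G) : B ⊆ prodset A B :=
  fun x hx ↦ ⟨1, Or.inr rfl, x, Or.inl hx, one_mul x⟩

theorem ncard_prodset_inter (A B : Set G) {J : Set G} (hJ : J.Finite) :
    (prodset A B ∩ J).ncard = (B ∩ J).ncard + (prodset A B ∩ (J \ B)).ncard := by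
  rw [← Set.ncard_inter_add_ncard_sdiff_eq_ncard _ B (hJ.subset Set.inter_subset_right),
    Set.inter_right_comm, Set.inter_eq_right.2 (subset_prodset_right A B),
    Set.inter_comm B, Set.inter_sdiff_assoc]

theorem densJ_mul_ncard_le_prodset_inter {𝒥 : Set (Set G)} (A : Set G) {B F : Set G} {b : G}
    (hb : b ∈ B) (hF : F.Finite) (hFb : (· * b⁻¹) '' F ∈ 𝒥) :
    densJ 𝒥 A * F.ncard ≤ (prodset A B ∩ F).ncard := by
  have hmaps : (· * b) '' (A ∩ (· * b⁻¹) '' F) ⊆ prodset A B ∩ F := by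
    rintro _ ⟨_, ⟨ha, x, hx, rfl⟩, rfl⟩
    exact ⟨⟨_, Or.inl ha, b, Or.inl hb, rfl⟩, by simpa using hx⟩
  calc densJ 𝒥 A * F.ncard
      = densJ 𝒥 A * ((· * b⁻¹) '' F).ncard := by
        rw [Set.ncard_image_of_injective _ (mul_left_injective _)]
    _ ≤ (A ∩ (· * b⁻¹) '' F).ncard := densJ_mul_ncard_le A hFb
    _ = ((· * b) '' (A ∩ (· * b⁻¹) '' F)).ncard := by
        rw [Set.ncard_image_of_injective _ (mul_left_injective _)]
    _ ≤ (prodset A B ∩ F).ncard := by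
        exact_mod_cast Set.ncard_le_ncard hmaps (hF.subset Set.inter_subset_right)

end Prodset

section LastBelow

variable {G : Type*} [PartialOrder G]

def IsLastBelow (B : Set G) (x b : G) : Prop :=
  b ∈ B ∧ b < x ∧ ∀ c ∈ B, c < x → toLinearExtension c ≤ toLinearExtension b

theorem exists_isLastBelow {B : Set G} {x : G} (hne : (B ∩ Set.Iio x).Nonempty)
    (hfin : (B ∩ Set.Iio x).Finite) : ∃ b, IsLastBelow B x b := by
  obtain ⟨b, ⟨hbB, hbx⟩, hb⟩ := hfin.exists_maximalFor toLinearExtension _ hne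
  exact ⟨b, hbB, hbx, fun c hc hcx ↦ (le_total _ _).elim (hb ⟨hc, hcx⟩) id⟩

theorem IsLastBelow.unique {B : Set G} {x b b' : G} (h : IsLastBelow B x b)
    (h' : IsLastBelow B x b') : b = b' :=
  show toLinearExtension b = toLinearExtension b' from
    le_antisymm (h'.2.2 b h.1 h.2.1) (h.2.2 b' h'.1 h'.2.1)

theorem IsLastBelow.of_mem_Ioo {B : Set G} {x b z : G} (h : IsLastBelow B x b)
    (hz : z ∈ Set.Ioo b x) : z ∉ B ∧ IsLastBelow B z b := by
  have hlt : toLinearExtension b < toLinearExtension z :=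
    lt_of_le_of_ne (toLinearExtension.monotone hz.1.le) hz.1.ne
  refine ⟨fun hzB ↦ (h.2.2 z hzB hz.2).not_gt hlt, h.1, hz.1, fun c hc hcz ↦ ?_⟩
  exact h.2.2 c hc (hcz.trans hz.2)

end LastBelow

section RightOrdered

variable {G : Type*} [Group G] [PartialOrder G]
  [CovariantClass G G (Function.swap (· * ·)) (· ≤ ·)]

theorem image_mul_inv_mem_goodJ {F : Set G} {b : G} (hne : F.Nonempty) (hfin : F.Finite)
    (hb : ∀ x ∈ F, b < x) (hgap : ∀ x ∈ F, Set.Ioo b x ⊆ F) :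
    (· * b⁻¹) '' F ∈ goodJ G := by
  refine ⟨hne.image _, hfin.image _, ?_, ?_⟩
  · rintro _ ⟨x, hx, rfl⟩
    simpa using mul_lt_mul_left (hb x hx) b⁻¹
  · rintro _ ⟨x, hx, rfl⟩ y ⟨hy1, hyx⟩
    refine ⟨y * b, hgap x hx ⟨?_, ?_⟩, by simp⟩
    · simpa using mul_lt_mul_left hy1 b
    · simpa using mul_lt_mul_left hyx b

theorem densJ_mul_ncard_diff_le (A : Set G) {B J : Set G} (hB : B ⊆ Set.Ioi 1)
    (hJ : J ∈ goodJ G)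
    (hBx : ∀ x ∈ J \ B, (B ∩ Set.Iio x).Nonempty ∧ (B ∩ Set.Iio x).Finite) :
    densJ (goodJ G) A * (J \ B).ncard ≤ (prodset A B ∩ (J \ B)).ncard := by
  obtain ⟨-, hJfin, -, hJdown⟩ := hJ
  let φ (x : G) : G := Classical.epsilon (IsLastBelow B x)
  have hφ (x : G) (hx : x ∈ J \ B) : IsLastBelow B x (φ x) :=
    Classical.epsilon_spec (exists_isLastBelow (hBx x hx).1 (hBx x hx).2)
  refine mul_ncard_le_of_fiberwise hJfin.sdiff _ φ ?_
  rintro b ⟨x₀, hx₀, rfl⟩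
  set F := {x ∈ J \ B | φ x = φ x₀}
  have hlast (x : G) (hx : x ∈ F) : IsLastBelow B x (φ x₀) := hx.2 ▸ hφ x hx.1
  have hgap (x : G) (hx : x ∈ F) : Set.Ioo (φ x₀) x ⊆ F := by
    intro z hz
    obtain ⟨hzB, hzlast⟩ := (hlast x hx).of_mem_Ioo hz
    have hzJ : z ∈ J := hJdown x hx.1.1 ⟨(hB (hφ x₀ hx₀).1).trans hz.1, hz.2⟩
    exact ⟨⟨hzJ, hzB⟩, (hφ z ⟨hzJ, hzB⟩).unique hzlast⟩
  have hFfin : F.Finite := hJfin.sdiff.subset fun _ hx ↦ hx.1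
  exact densJ_mul_ncard_le_prodset_inter A (hφ x₀ hx₀).1 hFfin
    (image_mul_inv_mem_goodJ ⟨x₀, hx₀, rfl⟩ hFfin (fun x hx ↦ (hlast x hx).2.1) hgap)

end RightOrdered

theorem densJ_prodset_ge_right_general
    {G : Type*} [Group G] [PartialOrder G]
    [CovariantClass G G (Function.swap (· * ·)) (· ≤ ·)]
    (A B : Set G) (hB : B ⊆ Set.Ioi 1)
    (α β : ℝ) (hα : densJ (goodJ G) A = α) (hβ : densJ (goodJ G) B = β)
    (hBx : ∀ J ∈ goodJ G, ∀ x ∈ J \ B,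
      (B ∩ Set.Iio x).Nonempty ∧ (B ∩ Set.Iio x).Finite) :
    densJ (goodJ G) (prodset A B) ≥ α + β - α * β := by
  subst hα hβ
  rcases (goodJ G).eq_empty_or_nonempty with hemp | hne
  · simp [hemp]
  refine le_densJ _ hne (fun J hJ ↦ ncard_pos_of_mem_goodJ hJ) fun J hJ ↦ ?_
  have hJcard : ((B ∩ J).ncard : ℝ) + (J \ B).ncard = J.ncard := by
    rw [Set.inter_comm]
    exact_mod_cast Set.ncard_inter_add_ncard_sdiff_eq_ncard J B hJ.2.1
  have hα1 := densJ_le_one A hJ (ncard_pos_of_mem_goodJ hJ)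
  have hβJ := densJ_mul_ncard_le B hJ
  have hgaps := densJ_mul_ncard_diff_le A hB hJ (hBx J hJ)
  rw [ncard_prodset_inter A B hJ.2.1, Nat.cast_add]
  nlinarith [mul_nonneg (sub_nonneg.2 hα1) (sub_nonneg.2 hβJ)]

/-- Shnirel'man's inequality in a right partially ordered group:
`σ_𝒥(AB) ≥ α + β - αβ`. -/
theorem densJ_prodset_ge_right
    {G : Type*} [Group G] [PartialOrder G]
    [CovariantClass G G (Function.swap (· * ·)) (· ≤ ·)]
    (A B : Set G) (hA : A ⊆ Set.Ioi 1) (hB : B ⊆ Set.Ioi 1)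
    (α β : ℝ) (hα : densJ (goodJ G) A = α) (hβ : densJ (goodJ G) B = β)
    (hBx : ∀ J ∈ goodJ G, ∀ x ∈ J \ B,
      (B ∩ Set.Iio x).Nonempty ∧ (B ∩ Set.Iio x).Finite) :
    densJ (goodJ G) (prodset A B) ≥ α + β - α * β :=
  densJ_prodset_ge_right_general A B hB α β hα hβ hBx
end

section
/- Let ℤⁿ be the additive group of n-dimensional lattice points with the rectangular partial order, with positive cone ℕ₀ⁿ \ {0}. Let 𝒥 be the set of all downward closed nonempty finite subsets of ℕ₀ⁿ \ {0}, with associated density σ_𝒥. If A and B are subsets of ℕ₀ⁿ \ {0} with σ_𝒥(A) = α and σ_𝒥(B) = β, then σ_𝒥(A + B) ≥ α + β − αβ. -/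
/-- A subset `J` of the positive cone `ℕ₀ⁿ \ {0}` of `ℤⁿ` (with the rectangular,
i.e. coordinatewise, partial order) is downward closed if `x ∈ J` implies
`(0, x) ⊆ J`. -/
def DownwardClosedZ {n : ℕ} (J : Set (Fin n → ℤ)) : Prop :=
  J ⊆ {x | 0 < x} ∧ ∀ x ∈ J, Set.Ioo (0 : Fin n → ℤ) x ⊆ J

/-- The collection of all downward closed nonempty finite subsets of
`ℕ₀ⁿ \ {0}`. -/
def latticeJ (n : ℕ) : Set (Set (Fin n → ℤ)) :=
  {J | J.Nonempty ∧ J.Finite ∧ DownwardClosedZ J}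

/-- The sumset `A + B = {a + b : a ∈ A ∪ {0}, b ∈ B ∪ {0}}` of sets of
lattice points. -/
def sumsetZ {n : ℕ} (A B : Set (Fin n → ℤ)) : Set (Fin n → ℤ) :=
  {x | ∃ a ∈ A ∪ {0}, ∃ b ∈ B ∪ {0}, a + b = x}

/-!
Induct on `|A ∩ J|` for finite downward closed `J`, proving
`|(A + B) ∩ J| ≥ (1 - β) |A ∩ J| + β |J|` with `β = σ_𝒥(B)`.
Remove a maximal `a ∈ A ∩ J` together with everything above it: what remains of `J`
is still downward closed and has one point of `A` fewer, while the removed part is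
`{a} ∪ (J ∩ (a, ∞))`. Translating `J ∩ (a, ∞)` by `-a` gives a downward closed set,
on which `B` has at least its share `β`, and `a + (B ∩ (J - a)) ⊆ A + B`; the point `a`
itself lies in `A ⊆ A + B`. Combined with `|A ∩ J| ≥ α |J|` and `β ≤ 1` this gives
`|(A + B) ∩ J| ≥ (α + β - αβ) |J|`.
-/

open Set

lemma Set.ncard_eq_ncard_diff_Ici_add_ncard_inter_Ioi_add_one {α : Type*} [PartialOrder α]
    {s : Set α} {a : α} (hs : s.Finite) (ha : a ∈ s) :
    s.ncard = (s \ Ici a).ncard + (s ∩ Ioi a).ncard + 1 := by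
  rw [← ncard_inter_add_ncard_sdiff_eq_ncard s (Ici a) hs, ← Ioi_insert, inter_insert_of_mem ha,
    ncard_insert_of_notMem (by simp) (hs.inter_of_left _)]
  ring

section Density

variable {X : Type*} {𝒥 : Set (Set X)} {J : Set X}

lemma densJ_le (A : Set X) (hJ : J ∈ 𝒥) : densJ 𝒥 A ≤ ((A ∩ J).ncard : ℝ) / J.ncard :=
  csInf_le ⟨0, by rintro _ ⟨J, -, rfl⟩; positivity⟩ ⟨J, hJ, rfl⟩

lemma densJ_le_one_s15 (A : Set X) (hJ : J ∈ 𝒥) (hJf : J.Finite) : densJ 𝒥 A ≤ 1 :=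
  (densJ_le A hJ).trans <| div_le_one_of_le₀
    (mod_cast ncard_inter_le_ncard_right A J hJf) (Nat.cast_nonneg _)

end Density

variable {n : ℕ}

lemma subset_sumsetZ_left (A B : Set (Fin n → ℤ)) : A ⊆ sumsetZ A B :=
  fun x hx => ⟨x, Or.inl hx, 0, Or.inr rfl, add_zero x⟩

lemma subset_sumsetZ_right (A B : Set (Fin n → ℤ)) : B ⊆ sumsetZ A B :=
  fun x hx => ⟨0, Or.inr rfl, x, Or.inl hx, zero_add x⟩

lemma add_mem_sumsetZ {A B : Set (Fin n → ℤ)} {a b : Fin n → ℤ} (ha : a ∈ A)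
    (hb : b ∈ B) : a + b ∈ sumsetZ A B :=
  ⟨a, Or.inl ha, b, Or.inl hb, rfl⟩

namespace DownwardClosedZ

variable {J : Set (Fin n → ℤ)}

lemma diff_Ici (hJ : DownwardClosedZ J) (a : Fin n → ℤ) : DownwardClosedZ (J \ Ici a) :=
  ⟨sdiff_subset.trans hJ.1,
    fun x hx _ hy => ⟨hJ.2 x hx.1 hy, fun hay => hx.2 (le_trans hay hy.2.le)⟩⟩

lemma preimage_add_inter_Ioi (hJ : DownwardClosedZ J) {a : Fin n → ℤ} (ha : a ∈ J) :
    DownwardClosedZ ((a + ·) ⁻¹' (J ∩ Ioi a)) := by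
  refine ⟨fun _ hy => (lt_add_iff_pos_right a).1 hy.2, fun _ hy z hz => ⟨?_, ?_⟩⟩
  · exact hJ.2 _ hy.1 ⟨add_pos (hJ.1 ha) hz.1, add_lt_add_right hz.2 a⟩
  · exact lt_add_of_pos_right a hz.1

end DownwardClosedZ

lemma densJ_latticeJ_mul_ncard_le (A : Set (Fin n → ℤ)) {E : Set (Fin n → ℤ)}
    (hEf : E.Finite) (hE : DownwardClosedZ E) :
    densJ (latticeJ n) A * E.ncard ≤ (A ∩ E).ncard := by
  rcases E.eq_empty_or_nonempty with rfl | hne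
  · simp
  · have hpos : (0 : ℝ) < E.ncard := mod_cast (ncard_pos hEf).2 hne
    exact (le_div_iff₀ hpos).1 (densJ_le A ⟨hne, hEf, hE⟩)

lemma densJ_mul_ncard_inter_Ioi_le (A B : Set (Fin n → ℤ)) {J : Set (Fin n → ℤ)}
    (hJf : J.Finite) (hJ : DownwardClosedZ J) {a : Fin n → ℤ} (ha : a ∈ A ∩ J) :
    densJ (latticeJ n) B * (J ∩ Ioi a).ncard ≤ (sumsetZ A B ∩ J ∩ Ioi a).ncard := by
  set E := (a + ·) ⁻¹' (J ∩ Ioi a)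
  have hinj : Function.Injective (a + ·) := add_right_injective a
  have hE : E.ncard = (J ∩ Ioi a).ncard :=
    ncard_preimage_of_injective_subset_range hinj fun x _ => ⟨x - a, add_sub_cancel a x⟩
  have hBE : (a + ·) '' (B ∩ E) ⊆ sumsetZ A B ∩ J ∩ Ioi a :=
    image_subset_iff.2 fun y hy => ⟨⟨add_mem_sumsetZ ha.1 hy.1, hy.2.1⟩, hy.2.2⟩
  calc densJ (latticeJ n) B * (J ∩ Ioi a).ncard
      = densJ (latticeJ n) B * E.ncard := by rw [hE]
    _ ≤ (B ∩ E).ncard :=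
      densJ_latticeJ_mul_ncard_le B ((hJf.inter_of_left _).preimage hinj.injOn)
        (hJ.preimage_add_inter_Ioi ha.2)
    _ = ((a + ·) '' (B ∩ E)).ncard := by rw [ncard_image_of_injective _ hinj]
    _ ≤ (sumsetZ A B ∩ J ∩ Ioi a).ncard :=
      mod_cast ncard_le_ncard hBE ((hJf.inter_of_right _).inter_of_left _)

theorem one_sub_densJ_mul_add_densJ_mul_le_ncard_sumsetZ_inter (A B : Set (Fin n → ℤ))
    {J : Set (Fin n → ℤ)} (hJf : J.Finite) (hJ : DownwardClosedZ J) :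
    (1 - densJ (latticeJ n) B) * (A ∩ J).ncard + densJ (latticeJ n) B * J.ncard
      ≤ (sumsetZ A B ∩ J).ncard := by
  obtain ⟨k, hk⟩ : ∃ k, (A ∩ J).ncard = k := ⟨_, rfl⟩
  induction k generalizing J with
  | zero =>
    have hBJ : (B ∩ J).ncard ≤ (sumsetZ A B ∩ J).ncard :=
      ncard_le_ncard (inter_subset_inter_left J (subset_sumsetZ_right A B)) (hJf.inter_of_right _)
    have hB := densJ_latticeJ_mul_ncard_le B hJf hJ
    rw [hk, Nat.cast_zero, mul_zero, zero_add]
    exact hB.trans (mod_cast hBJ)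
  | succ k ih =>
    have hAJf : (A ∩ J).Finite := hJf.inter_of_right A
    obtain ⟨a, ha, hmax⟩ := hAJf.exists_maximal (nonempty_of_ncard_ne_zero (by omega))
    have hA_Ioi : A ∩ J ∩ Ioi a = ∅ :=
      eq_empty_of_forall_notMem fun x hx => (hx.2.not_ge (hmax hx.1 hx.2.le)).elim
    have hsplitA := ncard_eq_ncard_diff_Ici_add_ncard_inter_Ioi_add_one hAJf ha
    have hsplitC := ncard_eq_ncard_diff_Ici_add_ncard_inter_Ioi_add_one
      (hJf.inter_of_right (sumsetZ A B)) ⟨subset_sumsetZ_left A B ha.1, ha.2⟩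
    have hsplitJ := ncard_eq_ncard_diff_Ici_add_ncard_inter_Ioi_add_one hJf ha.2
    rw [hA_Ioi, ncard_empty, inter_sdiff_assoc] at hsplitA
    rw [inter_sdiff_assoc] at hsplitC
    have hk' : (A ∩ (J \ Ici a)).ncard = k := by omega
    have hrest := ih hJf.sdiff (hJ.diff_Ici a) hk'
    rw [hk'] at hrest
    have habove := densJ_mul_ncard_inter_Ioi_le A B hJf hJ ha
    rw [hk, hsplitC, hsplitJ]
    push_cast
    linarith

theorem lattice_shnirelman_inequality_general
    (n : ℕ) (A B : Set (Fin n → ℤ))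
    (α β : ℝ) (hα : densJ (latticeJ n) A = α) (hβ : densJ (latticeJ n) B = β) :
    densJ (latticeJ n) (sumsetZ A B) ≥ α + β - α * β := by
  subst hα hβ
  rcases (latticeJ n).eq_empty_or_nonempty with h𝒥 | ⟨J₀, hJ₀⟩
  · -- only for `n = 0`, where every density is the junk value `sInf ∅ = 0`
    simp [densJ, h𝒥]
  refine le_csInf ⟨_, J₀, hJ₀, rfl⟩ ?_
  rintro _ ⟨J, ⟨hJne, hJf, hJ⟩, rfl⟩
  have hJpos : (0 : ℝ) < J.ncard := mod_cast (ncard_pos hJf).2 hJne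
  have hA := densJ_latticeJ_mul_ncard_le A hJf hJ
  have hB_le_one := densJ_le_one_s15 B hJ₀ hJ₀.2.1
  have hsum := one_sub_densJ_mul_add_densJ_mul_le_ncard_sumsetZ_inter A B hJf hJ
  rw [le_div_iff₀ hJpos]
  linarith [mul_le_mul_of_nonneg_left hA (sub_nonneg.2 hB_le_one)]

/-- Shnirel'man's inequality for lattice points: if `A, B ⊆ ℕ₀ⁿ \ {0}` with
`σ_𝒥(A) = α` and `σ_𝒥(B) = β`, then `σ_𝒥(A + B) ≥ α + β - αβ`. -/
theorem lattice_shnirelman_inequality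
    (n : ℕ) (A B : Set (Fin n → ℤ))
    (hA : A ⊆ {x | 0 < x}) (hB : B ⊆ {x | 0 < x})
    (α β : ℝ) (hα : densJ (latticeJ n) A = α) (hβ : densJ (latticeJ n) B = β) :
    densJ (latticeJ n) (sumsetZ A B) ≥ α + β - α * β :=
  lattice_shnirelman_inequality_general n A B α β hα hβ
end
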